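/- Efficiency improvement of RC3P over CCP under the per-class conditions of Theorem 2. Let (Ω, 𝓕, P) be a probability space, 𝒳 a measurable space, K ≥ 1 an integer, X : Ω → 𝒳 and Y : Ω → {1,…,K} random variables, and let V : 𝒳 × {1,…,K} → ℝ and r : 𝒳 × {1,…,K} → ℕ be measurable. Fix α ∈ (0,1). For each class y ∈ {1,…,K} assume p_y := P(Y = y) satisfies 0 < p_y < 1, let Q(y) ∈ ℝ be a score threshold with P(V(X,y) ≤ Q(y) | Y = y) ≥ 1 − α, let k̂(y) ∈ ℕ, and set ε_y := P(r(X,y) > k̂(y) | Y = y) and D_y := P(r(X,y) ≤ k̂(y) | Y ≠ y). Suppose for each y there exists B_y ∈ ℝ with P(V(X,y) ≤ Q(y) | Y ≠ y) ≥ B_y and B_y − D_y ≥ (p_y/(1 − p_y))·(α − ε_y). Then for any choice of score thresholds q(y) ∈ ℝ, E[|{y : V(X,y) ≤ q(y) and r(X,y) ≤ k̂(y)}|] ≤ E[|{y : V(X,y) ≤ Q(y)}|], i.e., the RC3P prediction set has expected size at most that of the CCP prediction set. -/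

import Mathlib

/-
Both expected set sizes are sums over classes of coverage probabilities, and the RC3P
coverage of `y` is at most `P(r(X,y) ≤ k̂(y))`, so it suffices to compare that with
`P(V(X,y) ≤ Q(y))` class by class. Splitting over `{Y = y}` and its complement, the rank event
has probability `p(1 - ε) + (1 - p) D` and the CCP event at least `p(1 - α) + (1 - p) B`;
the gap condition multiplied by `1 - p` says that the latter dominates.
-/

open MeasureTheory

noncomputable def pr {Ω : Type*} [MeasurableSpace Ω] (P : Measure Ω) (A : Set Ω) : ℝ :=
  (P A).toReal

/-- Conditional probability `P(A | B) = P(A ∩ B) / P(B)`, as a real number. -/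
noncomputable def cpr {Ω : Type*} [MeasurableSpace Ω] (P : Measure Ω) (A B : Set Ω) : ℝ :=
  pr P (A ∩ B) / pr P B

section Probability

variable {Ω : Type*} [MeasurableSpace Ω] (P : Measure Ω)

theorem pr_nonneg (A : Set Ω) : 0 ≤ pr P A :=
  ENNReal.toReal_nonneg

theorem pr_mono [IsFiniteMeasure P] {A B : Set Ω} (h : A ⊆ B) : pr P A ≤ pr P B :=
  measureReal_mono h

theorem pr_inter_add_pr_inter_compl [IsFiniteMeasure P] (A : Set Ω) {E : Set Ω}
    (hE : MeasurableSet E) : pr P (A ∩ E) + pr P (A ∩ Eᶜ) = pr P A :=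
  measureReal_inter_add_sdiff hE

theorem pr_compl [IsProbabilityMeasure P] {E : Set Ω} (hE : MeasurableSet E) :
    pr P Eᶜ = 1 - pr P E :=
  probReal_compl_eq_one_sub hE

theorem cpr_mul_pr {A E : Set Ω} (hE : pr P E ≠ 0) : cpr P A E * pr P E = pr P (A ∩ E) :=
  div_mul_cancel₀ _ hE

theorem integral_ncard_setOf {ι : Type*} [Fintype ι] [IsFiniteMeasure P] (S : Ω → ι → Prop)
    (hS : ∀ i, MeasurableSet {ω | S ω i}) :
    ∫ ω, ({i | S ω i}.ncard : ℝ) ∂P = ∑ i, pr P {ω | S ω i} := by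
  classical
  have hcount : ∀ ω, ({i | S ω i}.ncard : ℝ) = ∑ i, {ω | S ω i}.indicator 1 ω := by
    intro ω
    simp [Set.indicator_apply, Finset.sum_boole, Set.ncard_eq_toFinset_card']
  simp_rw [hcount]
  rw [integral_finsetSum _ fun i _ => (integrable_const 1).indicator (hS i)]
  simp_rw [integral_indicator_one (hS _)]
  rfl

theorem pr_le_pr_of_gap [IsProbabilityMeasure P] {E C R : Set Ω} (hE : MeasurableSet E)
    (hR : MeasurableSet R) (hp0 : 0 < pr P E) (hp1 : pr P E < 1) {α : ℝ}
    (hcov : 1 - α ≤ cpr P C E)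
    (hgap : pr P E / (1 - pr P E) * (α - cpr P Rᶜ E) ≤ cpr P C Eᶜ - cpr P R Eᶜ) :
    pr P R ≤ pr P C := by
  set p := pr P E
  have hEc : pr P Eᶜ ≠ 0 := by rw [pr_compl P hE]; linarith
  have hcovE : (1 - α) * p ≤ pr P (C ∩ E) := by
    rw [← cpr_mul_pr P hp0.ne']
    exact mul_le_mul_of_nonneg_right hcov hp0.le
  have hgap' : p * α - pr P (Rᶜ ∩ E) ≤ pr P (C ∩ Eᶜ) - pr P (R ∩ Eᶜ) := by
    have h := mul_le_mul_of_nonneg_right hgap (pr_nonneg P Eᶜ)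
    rwa [sub_mul, cpr_mul_pr P hEc, cpr_mul_pr P hEc, pr_compl P hE, mul_right_comm,
      div_mul_cancel₀ _ (sub_ne_zero.2 hp1.ne'), mul_sub, mul_comm p (cpr P Rᶜ E),
      cpr_mul_pr P hp0.ne'] at h
  have hE_split := pr_inter_add_pr_inter_compl P E hR
  rw [Set.inter_comm, Set.inter_comm E] at hE_split
  linarith [pr_inter_add_pr_inter_compl P R hE, pr_inter_add_pr_inter_compl P C hE]

end Probability

theorem rc3p_efficiency_from_theorem2_conditions_general
    {Ω 𝒳 : Type*} [MeasurableSpace Ω] [MeasurableSpace 𝒳]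
    (P : Measure Ω) [IsProbabilityMeasure P]
    (K : ℕ)
    (X : Ω → 𝒳) (Y : Ω → Fin K) (hX : Measurable X) (hY : Measurable Y)
    (V : 𝒳 → Fin K → ℝ) (r : 𝒳 → Fin K → ℕ)
    (hV : ∀ y, Measurable fun x => V x y) (hr : ∀ y, Measurable fun x => r x y)
    (α : ℝ)
    (Q : Fin K → ℝ) (khat : Fin K → ℕ)
    (hp : ∀ y : Fin K, 0 < pr P {ω | Y ω = y} ∧ pr P {ω | Y ω = y} < 1)
    (hQ : ∀ y : Fin K, 1 - α ≤ cpr P {ω | V (X ω) y ≤ Q y} {ω | Y ω = y})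
    (hB : ∀ y : Fin K, ∃ B : ℝ,
      B ≤ cpr P {ω | V (X ω) y ≤ Q y} {ω | Y ω ≠ y} ∧
      pr P {ω | Y ω = y} / (1 - pr P {ω | Y ω = y}) *
          (α - cpr P {ω | khat y < r (X ω) y} {ω | Y ω = y})
        ≤ B - cpr P {ω | r (X ω) y ≤ khat y} {ω | Y ω ≠ y}) :
    ∀ q : Fin K → ℝ,
      ∫ ω, (Set.ncard {y : Fin K | V (X ω) y ≤ q y ∧ r (X ω) y ≤ khat y} : ℝ) ∂P
        ≤ ∫ ω, (Set.ncard {y : Fin K | V (X ω) y ≤ Q y} : ℝ) ∂P := by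
  intro q
  have hV_le (s : Fin K → ℝ) (y : Fin K) : MeasurableSet {ω | V (X ω) y ≤ s y} :=
    measurableSet_le ((hV y).comp hX) measurable_const
  have hr_le (y : Fin K) : MeasurableSet {ω | r (X ω) y ≤ khat y} :=
    measurableSet_le ((hr y).comp hX) measurable_const
  have hrc3p (y : Fin K) : MeasurableSet {ω | V (X ω) y ≤ q y ∧ r (X ω) y ≤ khat y} :=
    (hV_le q y).inter (hr_le y)
  rw [integral_ncard_setOf P _ hrc3p, integral_ncard_setOf P _ (hV_le Q)]
  refine Finset.sum_le_sum fun y _ => ?_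
  obtain ⟨B, hB_le, hB_gap⟩ := hB y
  have hrank_compl : {ω | khat y < r (X ω) y} = {ω | r (X ω) y ≤ khat y}ᶜ := by
    ext ω; simp
  have hclass_compl : {ω | Y ω ≠ y} = {ω | Y ω = y}ᶜ := rfl
  rw [hrank_compl, hclass_compl] at hB_gap
  rw [hclass_compl] at hB_le
  have hclass : MeasurableSet {ω | Y ω = y} := hY (measurableSet_singleton y)
  calc pr P {ω | V (X ω) y ≤ q y ∧ r (X ω) y ≤ khat y}
      ≤ pr P {ω | r (X ω) y ≤ khat y} := pr_mono P fun ω h => h.2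
    _ ≤ pr P {ω | V (X ω) y ≤ Q y} :=
      pr_le_pr_of_gap P hclass (hr_le y) (hp y).1 (hp y).2 (hQ y)
        (by linarith)

/-- **Efficiency improvement of RC3P over CCP under the per-class conditions of Theorem 2.**
If for every class `y` the CCP threshold `Q(y)` satisfies
`P(V(X,y) ≤ Q(y) | Y = y) ≥ 1 − α`, and there is a real `B_y` with
`P(V(X,y) ≤ Q(y) | Y ≠ y) ≥ B_y` and
`B_y − D_y ≥ (p_y/(1 − p_y))·(α − ε_y)` where
`p_y = P(Y = y)`, `ε_y = P(r(X,y) > k̂(y) | Y = y)`, `D_y = P(r(X,y) ≤ k̂(y) | Y ≠ y)`,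
then for any RC3P score thresholds `q`, the RC3P prediction set has expected size at most
that of the CCP prediction set. -/
theorem rc3p_efficiency_from_theorem2_conditions
    {Ω 𝒳 : Type*} [MeasurableSpace Ω] [MeasurableSpace 𝒳]
    (P : Measure Ω) [IsProbabilityMeasure P]
    (K : ℕ) (hK : 1 ≤ K)
    (X : Ω → 𝒳) (Y : Ω → Fin K) (hX : Measurable X) (hY : Measurable Y)
    (V : 𝒳 → Fin K → ℝ) (r : 𝒳 → Fin K → ℕ)
    (hV : ∀ y, Measurable fun x => V x y) (hr : ∀ y, Measurable fun x => r x y)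
    (α : ℝ) (hα : α ∈ Set.Ioo (0 : ℝ) 1)
    (Q : Fin K → ℝ) (khat : Fin K → ℕ)
    (hp : ∀ y : Fin K, 0 < pr P {ω | Y ω = y} ∧ pr P {ω | Y ω = y} < 1)
    (hQ : ∀ y : Fin K, 1 - α ≤ cpr P {ω | V (X ω) y ≤ Q y} {ω | Y ω = y})
    (hB : ∀ y : Fin K, ∃ B : ℝ,
      B ≤ cpr P {ω | V (X ω) y ≤ Q y} {ω | Y ω ≠ y} ∧
      pr P {ω | Y ω = y} / (1 - pr P {ω | Y ω = y}) *
          (α - cpr P {ω | khat y < r (X ω) y} {ω | Y ω = y})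
        ≤ B - cpr P {ω | r (X ω) y ≤ khat y} {ω | Y ω ≠ y}) :
    ∀ q : Fin K → ℝ,
      ∫ ω, (Set.ncard {y : Fin K | V (X ω) y ≤ q y ∧ r (X ω) y ≤ khat y} : ℝ) ∂P
        ≤ ∫ ω, (Set.ncard {y : Fin K | V (X ω) y ≤ Q y} : ℝ) ∂P :=
  rc3p_efficiency_from_theorem2_conditions_general P K X Y hX hY V r hV hr α Q khat hp hQ hB
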